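/- The map A(ξ₁,ξ₂) = (ξ₁ + ξ₁ξ₂(1−ξ₁)/2, ξ₂ + ξ₁ξ₂(1−ξ₂)/2) (the CE map) has Jacobian determinant strictly positive on the closed unit square [0,1]², and hence is a local diffeomorphism there. -/

import Mathlib

set_option autoImplicit false

open Matrix ContinuousLinearMap

/-!
At `(x, y)` the Jacobian determinant of the CE map is
`(1 - x y / 2) ^ 2 + (x (1 - y) + y (1 - x)) (2 - x y) / 4`, a positive square plus a term that
is nonnegative on the unit square. A nonzero Jacobian determinant makes the derivative invertible,
so the inverse function theorem gives local injectivity.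
-/

theorem HasStrictFDerivAt.exists_mem_nhds_injOn_of_det_ne_zero {𝕜 E : Type*}
    [NontriviallyNormedField 𝕜] [CompleteSpace 𝕜] [NormedAddCommGroup E] [NormedSpace 𝕜 E]
    [FiniteDimensional 𝕜 E] {f : E → E} {f' : E →L[𝕜] E} {x : E}
    (hf : HasStrictFDerivAt f f' x) (hdet : f'.det ≠ 0) :
    ∃ u ∈ nhds x, Set.InjOn f u := by
  have : CompleteSpace E := FiniteDimensional.complete 𝕜 E
  have hf' : HasStrictFDerivAt f (f'.toContinuousLinearEquivOfDetNeZero hdet : E →L[𝕜] E) x := by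
    rwa [coe_toContinuousLinearEquivOfDetNeZero]
  refine ⟨(hf'.toOpenPartialHomeomorph f).source,
    (hf'.toOpenPartialHomeomorph f).open_source.mem_nhds hf'.mem_toOpenPartialHomeomorph_source, ?_⟩
  simpa only [hf'.toOpenPartialHomeomorph_coe] using (hf'.toOpenPartialHomeomorph f).injOn

theorem HasFDerivAt.det_partialDerivs_eq_det {𝕜 : Type*} [NontriviallyNormedField 𝕜]
    {f : 𝕜 × 𝕜 → 𝕜 × 𝕜} {f' : 𝕜 × 𝕜 →L[𝕜] 𝕜 × 𝕜} {x : 𝕜 × 𝕜} (hf : HasFDerivAt f f' x) :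
    (!![fderiv 𝕜 (fun p => (f p).1) x (1, 0), fderiv 𝕜 (fun p => (f p).1) x (0, 1);
        fderiv 𝕜 (fun p => (f p).2) x (1, 0), fderiv 𝕜 (fun p => (f p).2) x (0, 1)]).det =
      f'.det := by
  rw [hf.fst.fderiv, hf.snd.fderiv, ContinuousLinearMap.det,
    ← LinearMap.det_toMatrix (Module.Basis.finTwoProd 𝕜)]
  congr 1
  ext i j
  fin_cases i <;> fin_cases j <;> simp [LinearMap.toMatrix_apply]

noncomputable def ceMap (ξ : ℝ × ℝ) : ℝ × ℝ :=
  (ξ.1 + ξ.1 * ξ.2 * (1 - ξ.1) / 2, ξ.2 + ξ.1 * ξ.2 * (1 - ξ.2) / 2)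

noncomputable def ceJacobian (ξ : ℝ × ℝ) : Matrix (Fin 2) (Fin 2) ℝ :=
  !![1 + ξ.2 * (1 - 2 * ξ.1) / 2, ξ.1 * (1 - ξ.1) / 2;
     ξ.2 * (1 - ξ.2) / 2, 1 + ξ.1 * (1 - 2 * ξ.2) / 2]

noncomputable def ceFDeriv (ξ : ℝ × ℝ) : ℝ × ℝ →L[ℝ] ℝ × ℝ :=
  (Matrix.toLin (.finTwoProd ℝ) (.finTwoProd ℝ) (ceJacobian ξ)).toContinuousLinearMap

theorem hasStrictFDerivAt_ceMap (ξ : ℝ × ℝ) : HasStrictFDerivAt ceMap (ceFDeriv ξ) ξ := by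
  have hx : HasStrictFDerivAt (fun p : ℝ × ℝ => p.1) (fst ℝ ℝ ℝ) ξ := hasStrictFDerivAt_fst
  have hy : HasStrictFDerivAt (fun p : ℝ × ℝ => p.2) (snd ℝ ℝ ℝ) ξ := hasStrictFDerivAt_snd
  have hxy := hx.mul hy
  have h₁ := hx.add (((hxy.mul ((hasStrictFDerivAt_const 1 ξ).sub hx))).mul_const 2⁻¹)
  have h₂ := hy.add (((hxy.mul ((hasStrictFDerivAt_const 1 ξ).sub hy))).mul_const 2⁻¹)
  refine ((h₁.prodMk h₂).congr_fderiv ?_).congr_of_eventuallyEq (.of_eq ?_)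
  · rw [ceFDeriv, ceJacobian, Matrix.toLin_finTwoProd_toContinuousLinearMap]
    ext <;> simp only [Pi.mul_apply, Pi.sub_apply, zero_sub, smul_neg, smul_add,
      ContinuousLinearMap.comp_apply, inl_apply, inr_apply, prod_apply, _root_.add_apply, coe_fst',
      coe_snd', _root_.neg_apply, _root_.smul_apply, smul_eq_mul, mul_zero, zero_add, add_zero,
      neg_zero] <;> ring
  · ext p <;> simp [ceMap, div_eq_mul_inv]

theorem det_ceFDeriv (ξ : ℝ × ℝ) : (ceFDeriv ξ).det = (ceJacobian ξ).det :=
  LinearMap.det_toLin _ _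

theorem det_ceJacobian (ξ : ℝ × ℝ) : (ceJacobian ξ).det =
    (1 - ξ.1 * ξ.2 / 2) ^ 2 + (ξ.1 * (1 - ξ.2) + ξ.2 * (1 - ξ.1)) * (2 - ξ.1 * ξ.2) / 4 := by
  rw [ceJacobian, det_fin_two_of]
  ring

theorem det_ceJacobian_pos {ξ : ℝ × ℝ} (hξ : ξ ∈ Set.Icc (0, 0) (1, 1)) :
    0 < (ceJacobian ξ).det := by
  obtain ⟨⟨hx₀, hy₀⟩, hx₁, hy₁⟩ := hξ
  have hxy : ξ.1 * ξ.2 ≤ 1 := mul_le_one₀ hx₁ hy₀ hy₁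
  have hsq : 0 < (1 - ξ.1 * ξ.2 / 2) ^ 2 := pow_pos (by linarith) 2
  have hmixed : 0 ≤ (ξ.1 * (1 - ξ.2) + ξ.2 * (1 - ξ.1)) * (2 - ξ.1 * ξ.2) :=
    mul_nonneg (add_nonneg (mul_nonneg hx₀ (sub_nonneg.2 hy₁)) (mul_nonneg hy₀ (sub_nonneg.2 hx₁)))
      (by linarith)
  rw [det_ceJacobian]
  linarith

/-- the CE map
`A(ξ₁,ξ₂) = (ξ₁ + ξ₁ξ₂(1−ξ₁)/2, ξ₂ + ξ₁ξ₂(1−ξ₂)/2)` has strictly positive Jacobian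
determinant on the closed unit square `[0,1]²`, and hence is a local diffeomorphism
there (locally injective around each interior point). -/
theorem stmt14
    (A : ℝ × ℝ → ℝ × ℝ)
    (hA : ∀ ξ : ℝ × ℝ, A ξ =
      (ξ.1 + ξ.1 * ξ.2 * (1 - ξ.1) / 2, ξ.2 + ξ.1 * ξ.2 * (1 - ξ.2) / 2)) :
    (∀ ξ ∈ Set.Icc ((0 : ℝ), (0 : ℝ)) ((1 : ℝ), (1 : ℝ)),
      0 < (!![fderiv ℝ (fun p => (A p).1) ξ (1, 0),
              fderiv ℝ (fun p => (A p).1) ξ (0, 1);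
              fderiv ℝ (fun p => (A p).2) ξ (1, 0),
              fderiv ℝ (fun p => (A p).2) ξ (0, 1)]).det) ∧
    (∀ ξ ∈ Set.Ioo ((0 : ℝ), (0 : ℝ)) ((1 : ℝ), (1 : ℝ)),
      ∃ u ∈ nhds ξ, Set.InjOn A u) := by
  obtain rfl : A = ceMap := funext hA
  refine ⟨fun ξ hξ => ?_, fun ξ hξ => ?_⟩
  · rw [(hasStrictFDerivAt_ceMap ξ).hasFDerivAt.det_partialDerivs_eq_det, det_ceFDeriv]
    exact det_ceJacobian_pos hξ
  · refine (hasStrictFDerivAt_ceMap ξ).exists_mem_nhds_injOn_of_det_ne_zero ?_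
    rw [det_ceFDeriv]
    exact (det_ceJacobian_pos (Set.Ioo_subset_Icc_self hξ)).ne'
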